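/- Let m ≥ 1 and n ≥ 1 be integers and set P = ∏_{i=1}^m (v_i²−1) ∈ ℚ(v₁,…,v_m,t). On the elliptic curve E_n over ℚ(v₁,…,v_m,t) given by Y² = X³ + P(P−2tⁿ)X² + t^{2n}P²X, the point Q = (tⁿP, tⁿP²) is a rational point satisfying 2Q = (0,0), and Q has order exactly 4 in the group of rational points. -/

import Mathlib

/-- The field `ℚ(v₁, …, v_m, t)` of rational functions in `m + 1` variables over `ℚ`. -/
noncomputable abbrev Km (m : ℕ) : Type := FractionRing (MvPolynomial (Fin (m + 1)) ℚ)

/-- The variable `v_i` of `ℚ(v₁, …, v_m, t)`. -/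
noncomputable def vm (m : ℕ) (i : Fin m) : Km m :=
  algebraMap (MvPolynomial (Fin (m + 1)) ℚ) (Km m) (MvPolynomial.X i.castSucc)

/-- The variable `t` of `ℚ(v₁, …, v_m, t)`. -/
noncomputable def tm (m : ℕ) : Km m :=
  algebraMap (MvPolynomial (Fin (m + 1)) ℚ) (Km m) (MvPolynomial.X (Fin.last m))

/-- `P = ∏_{i=1}^m (v_i² - 1) ∈ ℚ(v₁, …, v_m, t)`. -/
noncomputable def Pm (m : ℕ) : Km m := ∏ i : Fin m, (vm m i ^ 2 - 1)

/-- `E_n`: the Weierstrass curve `Y² = X³ + P(P - 2tⁿ)X² + t^{2n}P²X` over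
`ℚ(v₁, …, v_m, t)`, where `P = ∏_{i=1}^m (v_i² - 1)`; this is the Weierstrass model of
the elliptic fibration on the variety `Z_(n)^(m+2)` birational to `Y_(n)^(m+2)`. -/
noncomputable def En (m n : ℕ) : WeierstrassCurve (Km m) :=
  ⟨0, Pm m * (Pm m - 2 * tm m ^ n), 0, tm m ^ (2 * n) * Pm m ^ 2, 0⟩

/-!
On a curve `Y² = X³ + aX² + bX`, a point `Q = (x, y)` with `x² = b` and `y ≠ 0` satisfies
`y² = x²(2x + a)`, so the tangent line at `Q` has slope `y / x` and passes through `(0, 0)`;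
the third intersection of that tangent with the curve is therefore `(0, 0)`, which is
`2`-torsion, so `2Q = (0, 0)` and `Q` has order `4`. For `E_n` take `x = tⁿP`, `y = tⁿP²`:
then `x² = t^{2n}P²` and `2x + a = P²`.
-/

lemma addOrderOf_eq_four {G : Type*} [AddMonoid G] {Q R : G} (hQ : 2 • Q = R) (hR : R ≠ 0)
    (hR₂ : 2 • R = 0) : addOrderOf Q = 4 := by
  have : Fact (Nat.Prime 2) := ⟨Nat.prime_two⟩
  have h4 : 2 ^ (1 + 1) • Q = 0 := by rw [pow_succ, mul_smul, hQ, pow_one, hR₂]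
  simpa using addOrderOf_eq_prime_pow (p := 2) (n := 1) (by simpa [hQ] using hR) h4

namespace WeierstrassCurve.Affine

variable {F : Type*} [Field F] {W : WeierstrassCurve.Affine F}

lemma nonsingular_of_Y_ne_negY {x y : F} (h : W.Equation x y) (hy : y ≠ W.negY x y) :
    W.Nonsingular x y :=
  (nonsingular_iff x y).mpr ⟨h, Or.inr hy⟩

lemma negY_eq_neg_of_a₁_a₃_eq_zero (ha₁ : W.a₁ = 0) (ha₃ : W.a₃ = 0) (x y : F) :
    W.negY x y = -y := by
  simp [negY, ha₁, ha₃]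

lemma Y_ne_negY_of_a₁_a₃_eq_zero (ha₁ : W.a₁ = 0) (ha₃ : W.a₃ = 0) (h2 : (2 : F) ≠ 0)
    {x y : F} (hy : y ≠ 0) : y ≠ W.negY x y := by
  rw [negY_eq_neg_of_a₁_a₃_eq_zero ha₁ ha₃]
  intro h
  exact hy (by simpa [h2] using (by linear_combination h : (2 : F) * y = 0))

namespace Point

variable [DecidableEq F]

lemma two_nsmul_some_zero_zero (ha₃ : W.a₃ = 0) (h₀ : W.Nonsingular 0 0) :
    2 • some 0 0 h₀ = 0 := by
  rw [two_smul, add_self_of_Y_eq (by simp [negY, ha₃])]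

lemma two_nsmul_some_of_sq_eq_a₄ (ha₁ : W.a₁ = 0) (ha₃ : W.a₃ = 0) (ha₆ : W.a₆ = 0)
    (h2 : (2 : F) ≠ 0) {x y : F} (h : W.Nonsingular x y) (h₀ : W.Nonsingular 0 0) (hy : y ≠ 0)
    (hx : x ^ 2 = W.a₄) : 2 • some x y h = some 0 0 h₀ := by
  have hyneg := Y_ne_negY_of_a₁_a₃_eq_zero ha₁ ha₃ h2 (x := x) hy
  have hcurve : y ^ 2 = x ^ 2 * (2 * x + W.a₂) := by
    have := (equation_iff x y).mp h.1
    rw [ha₁, ha₃, ha₆, ← hx] at this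
    linear_combination this
  have hx₀ : x ≠ 0 := by
    rintro rfl
    exact hy (pow_eq_zero_iff two_ne_zero |>.mp (by simpa using hcurve))
  have hslope : W.slope x x y y = y / x := by
    rw [slope_of_Y_ne rfl hyneg, negY_eq_neg_of_a₁_a₃_eq_zero ha₁ ha₃, ha₁, ← hx,
      div_eq_div_iff (by rw [sub_neg_eq_add, ← two_mul]; exact mul_ne_zero h2 hy) hx₀]
    linear_combination (-2) * hcurve
  have hX : W.addX x x (W.slope x x y y) = 0 := by
    rw [hslope, addX, ha₁, div_pow, hcurve]
    field_simp
    ring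
  have hY : W.addY x x y (W.slope x x y y) = 0 := by
    rw [addY, negAddY, hX, hslope, negY_eq_neg_of_a₁_a₃_eq_zero ha₁ ha₃]
    field_simp
    ring
  rw [two_smul, add_self_of_Y_ne hyneg]
  congr 1

lemma addOrderOf_some_of_sq_eq_a₄ (ha₁ : W.a₁ = 0) (ha₃ : W.a₃ = 0) (ha₆ : W.a₆ = 0)
    (h2 : (2 : F) ≠ 0) {x y : F} (h : W.Nonsingular x y) (h₀ : W.Nonsingular 0 0) (hy : y ≠ 0)
    (hx : x ^ 2 = W.a₄) : addOrderOf (some x y h) = 4 :=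
  addOrderOf_eq_four (two_nsmul_some_of_sq_eq_a₄ ha₁ ha₃ ha₆ h2 h h₀ hy hx) (some_ne_zero h₀)
    (two_nsmul_some_zero_zero ha₃ h₀)

end Point

end WeierstrassCurve.Affine

lemma tm_ne_zero (m : ℕ) : tm m ≠ 0 :=
  (map_ne_zero_iff _ (IsFractionRing.injective _ _)).mpr (MvPolynomial.X_ne_zero _)

lemma Pm_ne_zero (m : ℕ) : Pm m ≠ 0 := by
  refine Finset.prod_ne_zero_iff.mpr fun i _ => ?_
  rw [vm, ← map_pow, ← map_one (algebraMap (MvPolynomial (Fin (m + 1)) ℚ) (Km m)), ← map_sub,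
    map_ne_zero_iff _ (IsFractionRing.injective _ _)]
  intro h
  simpa using congrArg (MvPolynomial.eval 0) h

theorem stmt15_general (m n : ℕ) :
    ∃ (h : (En m n).toAffine.Nonsingular (tm m ^ n * Pm m) (tm m ^ n * Pm m ^ 2))
      (h0 : (En m n).toAffine.Nonsingular 0 0),
      2 • (WeierstrassCurve.Affine.Point.some _ _ h) = WeierstrassCurve.Affine.Point.some _ _ h0 ∧
      addOrderOf (WeierstrassCurve.Affine.Point.some _ _ h) = 4 := by
  open WeierstrassCurve.Affine Point in
  have hx₀ : tm m ^ n * Pm m ≠ 0 := mul_ne_zero (pow_ne_zero n (tm_ne_zero m)) (Pm_ne_zero m)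
  have hy : tm m ^ n * Pm m ^ 2 ≠ 0 := by simp [tm_ne_zero, Pm_ne_zero]
  have hx : (tm m ^ n * Pm m) ^ 2 = (En m n).a₄ := by simp only [En]; ring
  have h : (En m n).toAffine.Nonsingular (tm m ^ n * Pm m) (tm m ^ n * Pm m ^ 2) :=
    nonsingular_of_Y_ne_negY (by rw [equation_iff]; simp only [En]; ring)
      (Y_ne_negY_of_a₁_a₃_eq_zero rfl rfl two_ne_zero hy)
  have h₀ : (En m n).toAffine.Nonsingular 0 0 :=
    nonsingular_zero.mpr ⟨rfl, Or.inr (hx ▸ pow_ne_zero 2 hx₀)⟩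
  exact ⟨h, h₀, two_nsmul_some_of_sq_eq_a₄ rfl rfl rfl two_ne_zero h h₀ hy hx,
    addOrderOf_some_of_sq_eq_a₄ rfl rfl rfl two_ne_zero h h₀ hy hx⟩

/-- For `m ≥ 1` and `n ≥ 1`, on the elliptic curve
`E_n : Y² = X³ + P(P - 2tⁿ)X² + t^{2n}P²X` over `ℚ(v₁, …, v_m, t)`, where
`P = ∏_{i=1}^m (v_i² - 1)`, the point `Q = (tⁿP, tⁿP²)` is a rational point satisfying
`2Q = (0, 0)`, and `Q` has order exactly `4` in the group of rational points. -/
theorem stmt15 (m n : ℕ) (hm : 1 ≤ m) (hn : 1 ≤ n) :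
    ∃ (h : (En m n).toAffine.Nonsingular (tm m ^ n * Pm m) (tm m ^ n * Pm m ^ 2))
      (h0 : (En m n).toAffine.Nonsingular 0 0),
      2 • (WeierstrassCurve.Affine.Point.some _ _ h) = WeierstrassCurve.Affine.Point.some _ _ h0 ∧
      addOrderOf (WeierstrassCurve.Affine.Point.some _ _ h) = 4 :=
  stmt15_general m n
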